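/- Let r : [0,1] → (0,∞) be continuous and differentiable at t = 1. Define h(x) = ∫₀ˣ r(t)(x²−t²) dt, k = ∫₀¹ t² r(t) dt, and g(t) = 24t³/h(t) − (t⁵h''(t) + 11t⁴h'(t))/h(t)² + 2t⁵h'(t)²/h(t)³ for t ∈ (0,1]. Then g is differentiable at t = 1, g'(1) − g(1) = (48h(1)³ − 6h'(1)³ + 2h(1)h'(1)(15h'(1) + 3h''(1)) − h(1)²(57h'(1) + 15h''(1) + h'''(1))) / h(1)⁴, and g'(1) − g(1) > 0 if and only if h(1)²·(5r(1) + r'(1)) + 24k³ < 12·h(1)·k·r(1). -/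

import Mathlib

open Set

/-- `h(x) = ∫₀ˣ r(t)(x²−t²) dt`. -/
noncomputable def hSix (r : ℝ → ℝ) (x : ℝ) : ℝ := ∫ t in (0 : ℝ)..x, r t * (x ^ 2 - t ^ 2)

/-- `h'`, the derivative of `h` within `[0,1]` (one-sided at the endpoints). -/
noncomputable def hSix' (r : ℝ → ℝ) : ℝ → ℝ := derivWithin (hSix r) (Icc 0 1)

/-- `h''`. -/
noncomputable def hSix'' (r : ℝ → ℝ) : ℝ → ℝ := derivWithin (hSix' r) (Icc 0 1)

/-- `h'''`. -/
noncomputable def hSix''' (r : ℝ → ℝ) : ℝ → ℝ := derivWithin (hSix'' r) (Icc 0 1)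

/-- `k = ∫₀¹ t² r(t) dt`. -/
noncomputable def kSix (r : ℝ → ℝ) : ℝ := ∫ t in (0 : ℝ)..1, t ^ 2 * r t

/-- `g(t) = 24t³/h(t) − (t⁵h''(t) + 11t⁴h'(t))/h(t)² + 2t⁵h'(t)²/h(t)³`. -/
noncomputable def gSix (r : ℝ → ℝ) (t : ℝ) : ℝ :=
  24 * t ^ 3 / hSix r t - (t ^ 5 * hSix'' r t + 11 * t ^ 4 * hSix' r t) / (hSix r t) ^ 2
    + 2 * t ^ 5 * (hSix' r t) ^ 2 / (hSix r t) ^ 3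

/-- The calculus computation underlying the six-dimensional criterion: for a
continuous positive `r` on `[0,1]`, one-sidedly differentiable at `1`, the function
`g` has a one-sided derivative `g'(1)` at `t = 1` satisfying
`g'(1) − g(1) = (48h(1)³ − 6h'(1)³ + 2h(1)h'(1)(15h'(1)+3h''(1)) − h(1)²(57h'(1)+15h''(1)+h'''(1)))/h(1)⁴`,
and `g'(1) − g(1) > 0 ↔ h(1)²(5r(1)+r'(1)) + 24k³ < 12h(1)k·r(1)`. -/
theorem gSix_deriv_sub_self_at_one
    (r : ℝ → ℝ)
    (hr_pos : ∀ t ∈ Icc (0 : ℝ) 1, 0 < r t)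
    (hr_cont : ContinuousOn r (Icc 0 1))
    (r'1 : ℝ) (hr'1 : HasDerivWithinAt r r'1 (Iic 1) 1) :
    ∃ g'1 : ℝ, HasDerivWithinAt (gSix r) g'1 (Iic 1) 1 ∧
      g'1 - gSix r 1 =
        (48 * (hSix r 1) ^ 3 - 6 * (hSix' r 1) ^ 3
          + 2 * hSix r 1 * hSix' r 1 * (15 * hSix' r 1 + 3 * hSix'' r 1)
          - (hSix r 1) ^ 2 * (57 * hSix' r 1 + 15 * hSix'' r 1 + hSix''' r 1))
        / (hSix r 1) ^ 4 ∧
      (g'1 - gSix r 1 > 0 ↔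
        (hSix r 1) ^ 2 * (5 * r 1 + r'1) + 24 * (kSix r) ^ 3
          < 12 * hSix r 1 * kSix r * r 1) := by
  have one_mem : (1:ℝ) ∈ Icc (0:ℝ) 1 := right_mem_Icc.mpr zero_le_one
  -- continuous extension of r
  set c : ℝ → ℝ := fun t => min 1 (max 0 t) with hc
  have ccont : Continuous c := continuous_const.min (continuous_const.max continuous_id)
  have cmem : ∀ t, c t ∈ Icc (0:ℝ) 1 := fun t => ⟨le_min zero_le_one (le_max_left _ _), min_le_left _ _⟩
  set ρ : ℝ → ℝ := fun t => r (c t) with hρ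
  have cρ : Continuous ρ := hr_cont.comp_continuous ccont cmem
  have hρeq : ∀ t ∈ Icc (0:ℝ) 1, ρ t = r t := by
    intro t ht
    simp only [hρ, hc, max_eq_right ht.1, min_eq_right ht.2]
  set Rt : ℝ → ℝ := fun x => ∫ t in (0:ℝ)..x, ρ t with hRt
  set Kt : ℝ → ℝ := fun x => ∫ t in (0:ℝ)..x, t ^ 2 * ρ t with hKt
  have hR' : ∀ x : ℝ, HasDerivAt Rt (ρ x) x := fun x =>
    (cρ.integral_hasStrictDerivAt 0 x).hasDerivAt
  have cKi : Continuous (fun t : ℝ => t ^ 2 * ρ t) := (continuous_pow 2).mul cρ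
  have hK' : ∀ x : ℝ, HasDerivAt Kt (x ^ 2 * ρ x) x := fun x =>
    (cKi.integral_hasStrictDerivAt 0 x).hasDerivAt
  -- expression for h on [0,1]
  have EqOn_h : ∀ x ∈ Icc (0:ℝ) 1, hSix r x = x ^ 2 * Rt x - Kt x := by
    intro x hx
    have hsub : uIcc (0:ℝ) x ⊆ Icc 0 1 := by
      rw [uIcc_of_le hx.1]; exact Icc_subset_Icc le_rfl hx.2
    have e1 : hSix r x = ∫ t in (0:ℝ)..x, ρ t * (x ^ 2 - t ^ 2) := by
      refine intervalIntegral.integral_congr fun t ht => ?_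
      rw [hρeq t (hsub ht)]
    rw [e1]
    have h1 : IntervalIntegrable (fun t : ℝ => x ^ 2 * ρ t) MeasureTheory.volume 0 x :=
      (continuous_const.mul cρ).intervalIntegrable _ _
    have h2 : IntervalIntegrable (fun t : ℝ => t ^ 2 * ρ t) MeasureTheory.volume 0 x :=
      cKi.intervalIntegrable _ _
    calc (∫ t in (0:ℝ)..x, ρ t * (x ^ 2 - t ^ 2))
        = ∫ t in (0:ℝ)..x, (x ^ 2 * ρ t - t ^ 2 * ρ t) := by
          refine intervalIntegral.integral_congr fun t _ => ?_; ring
      _ = (∫ t in (0:ℝ)..x, x ^ 2 * ρ t) - ∫ t in (0:ℝ)..x, t ^ 2 * ρ t :=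
          intervalIntegral.integral_sub h1 h2
      _ = x ^ 2 * Rt x - Kt x := by rw [intervalIntegral.integral_const_mul]
  -- h' = 2 x Rt x on [0,1]
  have hh' : ∀ x : ℝ, HasDerivAt (fun x => x ^ 2 * Rt x - Kt x) (2 * x * Rt x) x := by
    intro x
    have := ((hasDerivAt_pow 2 x).fun_mul (hR' x)).fun_sub (hK' x)
    refine this.congr_deriv ?_
    push_cast
    ring
  have E1 : ∀ x ∈ Icc (0:ℝ) 1, hSix' r x = 2 * x * Rt x := by
    intro x hx
    have e : derivWithin (hSix r) (Icc 0 1) x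
        = derivWithin (fun x => x ^ 2 * Rt x - Kt x) (Icc 0 1) x :=
      derivWithin_congr EqOn_h (EqOn_h x hx)
    show derivWithin (hSix r) (Icc 0 1) x = _
    rw [e]
    exact ((hh' x).hasDerivWithinAt).derivWithin (uniqueDiffOn_Icc one_pos x hx)
  -- h'' = 2 Rt x + 2 x r x on [0,1]
  have hh1' : ∀ x : ℝ, HasDerivAt (fun x => 2 * x * Rt x) (2 * Rt x + 2 * x * ρ x) x := by
    intro x
    have := (((hasDerivAt_id x).const_mul (2:ℝ)).fun_mul (hR' x))
    refine this.congr_deriv ?_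
    simp only [id_eq]
    ring
  have E2 : ∀ x ∈ Icc (0:ℝ) 1, hSix'' r x = 2 * Rt x + 2 * x * r x := by
    intro x hx
    have e : derivWithin (hSix' r) (Icc 0 1) x
        = derivWithin (fun x => 2 * x * Rt x) (Icc 0 1) x :=
      derivWithin_congr (fun y hy => E1 y hy) (E1 x hx)
    show derivWithin (hSix' r) (Icc 0 1) x = _
    rw [e, ((hh1' x).hasDerivWithinAt).derivWithin (uniqueDiffOn_Icc one_pos x hx),
      hρeq x hx]
  -- h''' at 1
  have hrIcc : HasDerivWithinAt r r'1 (Icc 0 1) 1 := hr'1.mono Icc_subset_Iic_self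
  have hh2'1 : HasDerivWithinAt (fun x => 2 * Rt x + 2 * x * r x)
      (4 * r 1 + 2 * r'1) (Icc 0 1) 1 := by
    have := (((hR' 1).hasDerivWithinAt (s := Icc 0 1)).const_mul (2:ℝ)).fun_add
      ((((hasDerivWithinAt_id (1:ℝ) (Icc 0 1)).const_mul (2:ℝ))).fun_mul hrIcc)
    refine this.congr_deriv ?_
    rw [hρeq 1 one_mem]
    simp only [id_eq]
    ring
  have E3 : hSix''' r 1 = 4 * r 1 + 2 * r'1 := by
    have e : derivWithin (hSix'' r) (Icc 0 1) 1
        = derivWithin (fun x => 2 * Rt x + 2 * x * r x) (Icc 0 1) 1 :=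
      derivWithin_congr (fun y hy => E2 y hy) (E2 1 one_mem)
    show derivWithin (hSix'' r) (Icc 0 1) 1 = _
    rw [e]
    exact hh2'1.derivWithin (uniqueDiffOn_Icc one_pos 1 one_mem)
  have hA : hSix' r 1 = 2 * Rt 1 := by simpa using E1 1 one_mem
  have hB : hSix'' r 1 = 2 * Rt 1 + 2 * r 1 := by simpa using E2 1 one_mem
  -- positivity of h(1)
  have Hpos : 0 < hSix r 1 := by
    show (0:ℝ) < ∫ t in (0:ℝ)..1, r t * ((1:ℝ) ^ 2 - t ^ 2)
    apply intervalIntegral.intervalIntegral_pos_of_pos_on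
    · apply ContinuousOn.intervalIntegrable
      rw [uIcc_of_le zero_le_one]
      exact hr_cont.mul ((continuous_const.sub (continuous_pow 2)).continuousOn)
    · intro x hx
      have h1 : 0 < r x := hr_pos x ⟨hx.1.le, hx.2.le⟩
      have h2 : (0:ℝ) < 1 ^ 2 - x ^ 2 := by nlinarith [hx.1, hx.2]
      exact mul_pos h1 h2
    · exact one_pos
  have Hne : hSix r 1 ≠ 0 := ne_of_gt Hpos
  have hk : kSix r = Kt 1 := by
    refine intervalIntegral.integral_congr fun t ht => ?_
    rw [uIcc_of_le zero_le_one] at ht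
    rw [hρeq t ht]
  have H_eq : hSix r 1 = Rt 1 - Kt 1 := by simpa using EqOn_h 1 one_mem
  -- move to Iic 1
  have memIcc : Icc (0:ℝ) 1 ∈ nhdsWithin (1:ℝ) (Iic 1) := by
    rw [← nhdsWithin_Icc_eq_nhdsLE (one_pos (α := ℝ))]
    exact self_mem_nhdsWithin
  have HD_h : HasDerivWithinAt (hSix r) (2 * Rt 1) (Iic 1) 1 := by
    refine HasDerivWithinAt.congr_of_eventuallyEq
      (((hh' 1).hasDerivWithinAt (s := Iic 1)).congr_deriv (by ring)) ?_ (EqOn_h 1 one_mem)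
    exact Filter.eventuallyEq_of_mem memIcc EqOn_h
  have HD_h1 : HasDerivWithinAt (hSix' r) (2 * Rt 1 + 2 * r 1) (Iic 1) 1 := by
    have base : HasDerivWithinAt (fun x => 2 * x * Rt x) (2 * Rt 1 + 2 * 1 * ρ 1) (Iic 1) 1 :=
      (hh1' 1).hasDerivWithinAt
    have base' : HasDerivWithinAt (fun x => 2 * x * Rt x) (2 * Rt 1 + 2 * r 1) (Iic 1) 1 := by
      convert base using 1
      rw [hρeq 1 one_mem]; ring
    refine base'.congr_of_eventuallyEq ?_ (by simpa using E1 1 one_mem)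
    exact Filter.eventuallyEq_of_mem memIcc fun y hy => E1 y hy
  have HD_h2 : HasDerivWithinAt (hSix'' r) (4 * r 1 + 2 * r'1) (Iic 1) 1 := by
    refine (hh2'1.mono_of_mem_nhdsWithin memIcc).congr_of_eventuallyEq ?_ (E2 1 one_mem)
    exact Filter.eventuallyEq_of_mem memIcc fun y hy => E2 y hy
  -- differentiate g
  set N : ℝ := 48 * (hSix r 1) ^ 3 - 6 * (hSix' r 1) ^ 3
      + 2 * hSix r 1 * hSix' r 1 * (15 * hSix' r 1 + 3 * hSix'' r 1)
      - (hSix r 1) ^ 2 * (57 * hSix' r 1 + 15 * hSix'' r 1 + hSix''' r 1) with hN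
  refine ⟨gSix r 1 + N / (hSix r 1) ^ 4, ?_, by rw [hN]; ring, ?_⟩
  · -- the derivative
    have p3 := (hasDerivWithinAt_pow 3 (1:ℝ) (s := Iic 1)).const_mul (24:ℝ)
    have p5 := hasDerivWithinAt_pow 5 (1:ℝ) (s := Iic 1)
    have p4 := (hasDerivWithinAt_pow 4 (1:ℝ) (s := Iic 1)).const_mul (11:ℝ)
    have term1 := p3.div HD_h Hne
    have num2 := (p5.mul HD_h2).add (p4.mul HD_h1)
    have term2 := num2.div (HD_h.pow 2) (pow_ne_zero 2 Hne)
    have num3 := (p5.const_mul (2:ℝ)).mul (HD_h1.pow 2)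
    have term3 := num3.div (HD_h.pow 3) (pow_ne_zero 3 Hne)
    have big := (term1.sub term2).add term3
    show HasDerivWithinAt (fun t : ℝ =>
      24 * t ^ 3 / hSix r t - (t ^ 5 * hSix'' r t + 11 * t ^ 4 * hSix' r t) / (hSix r t) ^ 2
        + 2 * t ^ 5 * (hSix' r t) ^ 2 / (hSix r t) ^ 3) _ (Iic 1) 1
    refine big.congr_deriv ?_
    simp only [gSix, hN, E3, hA, hB, Pi.pow_apply, Pi.mul_apply, Pi.add_apply]
    push_cast
    field_simp
    ring
  · -- the iff
    have hsimp : gSix r 1 + N / (hSix r 1) ^ 4 - gSix r 1 = N / (hSix r 1) ^ 4 := by ring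
    rw [hsimp]
    have hA2 : hSix' r 1 = 2 * (hSix r 1 + kSix r) := by rw [hA, H_eq, hk]; ring
    have hB2 : hSix'' r 1 = 2 * (hSix r 1 + kSix r) + 2 * r 1 := by rw [hB, H_eq, hk]; ring
    have hNval : N = 2 * (12 * hSix r 1 * kSix r * r 1
        - ((hSix r 1) ^ 2 * (5 * r 1 + r'1) + 24 * (kSix r) ^ 3)) := by
      rw [hN, E3, hA2, hB2]; ring
    rw [hNval]
    have h4 : (0:ℝ) < (hSix r 1) ^ 4 := by positivity
    rw [gt_iff_lt, div_pos_iff]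
    constructor
    · rintro (⟨h1, -⟩ | ⟨-, h2⟩)
      · linarith
      · linarith
    · intro hlt
      exact Or.inl ⟨by linarith, h4⟩
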